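/- arXiv:1410.5207 — 2 statements merged into one kernel-verified Lean document; each statement's English description precedes it below -/
import Mathlib

section
/- In the ring of formal power series over a field, the coefficient of t^n in 1/((1-t)^2 (1-t^2)) equals ⌊(n+2)^2/4⌋ for all natural numbers n. -/
/-!
Write `a n = ⌊(n+2)²/4⌋` and factor the denominator as `(1 - t)(1 - t²)(1 - t)`. Since
`⌊(n+1)²/4⌋ - ⌊n²/4⌋ = ⌊(n+1)/2⌋`, multiplying `∑ a n tⁿ` by `1 - t` gives `∑ ⌊(n+2)/2⌋ tⁿ`;
multiplying that by `1 - t²` gives `∑ tⁿ`, and a last factor `1 - t` gives `1`.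
-/

open PowerSeries

theorem Nat.succ_sq_div_four (n : ℕ) : (n + 1) ^ 2 / 4 = n ^ 2 / 4 + (n + 1) / 2 := by
  rcases Nat.even_or_odd' n with ⟨m, rfl | rfl⟩
  · rw [show (2 * m + 1) ^ 2 = 4 * (m ^ 2 + m) + 1 by ring,
      show (2 * m) ^ 2 = 4 * m ^ 2 by ring]
    omega
  · rw [show (2 * m + 1 + 1) ^ 2 = 4 * (m ^ 2 + 2 * m + 1) by ring,
      show (2 * m + 1) ^ 2 = 4 * (m ^ 2 + m) + 1 by ring]
    omega

namespace PowerSeries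

variable {R : Type*} [Ring R]

theorem coeff_one_sub_X_pow_mul (d n : ℕ) (f : R⟦X⟧) :
    coeff n ((1 - X ^ d) * f) = coeff n f - if d ≤ n then coeff (n - d) f else 0 := by
  rw [sub_mul, one_mul, map_sub, coeff_X_pow_mul']

theorem one_sub_X_mul_mk_sq_div_four :
    (1 - X) * mk (fun n ↦ (((n + 2) ^ 2 / 4 : ℕ) : R)) =
      mk (fun n ↦ (((n + 2) / 2 : ℕ) : R)) := by
  ext n
  rw [← pow_one (X : R⟦X⟧), coeff_one_sub_X_pow_mul]
  rcases n with _ | n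
  · simp
  · simp only [coeff_mk, Nat.le_add_left, if_true, Nat.add_sub_cancel,
      show n + 1 + 2 = n + 2 + 1 by ring, Nat.succ_sq_div_four (n + 2), Nat.cast_add,
      add_sub_cancel_left]

theorem one_sub_X_sq_mul_mk_div_two :
    (1 - X ^ 2) * mk (fun n ↦ (((n + 2) / 2 : ℕ) : R)) = mk 1 := by
  ext n
  rw [coeff_one_sub_X_pow_mul]
  rcases lt_or_ge n 2 with hn | hn
  · interval_cases n <;> simp
  · obtain ⟨m, rfl⟩ := Nat.exists_eq_add_of_le' hn
    simp only [coeff_mk, Nat.le_add_left, if_true, Nat.add_sub_cancel, Pi.one_apply,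
      show (m + 2 + 2) / 2 = (m + 2) / 2 + 1 by omega, Nat.cast_add_one, add_sub_cancel_left]

end PowerSeries

/-- The coefficient of `tⁿ` in the Hilbert series `1/((1-t)²(1-t²))` of a cubic
3-dimensional AS-regular algebra is `⌊(n+2)²/4⌋`. -/
theorem stmt_3 (k : Type*) [Field k] (n : ℕ) :
    PowerSeries.coeff n
        ((((1 - PowerSeries.X) ^ 2) * (1 - PowerSeries.X ^ 2))⁻¹ : PowerSeries k) =
      (((n + 2) ^ 2 / 4 : ℕ) : k) := by
  set a : k⟦X⟧ := mk fun n ↦ (((n + 2) ^ 2 / 4 : ℕ) : k)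
  have hunit : constantCoeff ((1 - X) ^ 2 * (1 - X ^ 2) : k⟦X⟧) ≠ 0 := by simp
  have hinv : ((1 - X) ^ 2 * (1 - X ^ 2) : k⟦X⟧)⁻¹ = a := by
    rw [inv_eq_iff_mul_eq_one hunit]
    calc a * ((1 - X) ^ 2 * (1 - X ^ 2)) = (1 - X) * ((1 - X ^ 2) * ((1 - X) * a)) := by ring
      _ = 1 := by
        rw [one_sub_X_mul_mk_sq_div_four, one_sub_X_sq_mul_mk_div_two, mul_comm,
          mk_one_mul_one_sub_eq_one]
  rw [hinv, coeff_mk]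
end

section
/- Let R be a ℤ-graded ring which is a 'graded field': every nonzero homogeneous element is invertible. Suppose there exists a nonzero element t of degree 1. Then R₀ is a division ring, t is a unit, and for every n ∈ ℤ the map R₀ → Rₙ, a ↦ a·tⁿ, is a bijection; moreover conjugation α(a) = t·a·t⁻¹ defines a ring automorphism of R₀ (so R ≅ R₀[t, t⁻¹; α] as graded rings). -/
/-!
Everything rests on one fact: the inverse of a homogeneous unit `x` of degree `i` is homogeneous
of degree `-i`, because comparing degree-`0` components in `x * x⁻¹ = 1` shows that `x` times the
degree-`(-i)` component of `x⁻¹` is already `1`. Then `r t⁻ⁿ ∈ R₀` for `r ∈ Rₙ`, which gives the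
factorization `r = (r t⁻ⁿ) tⁿ`, and conjugation by `t` preserves degrees.
-/

open DirectSum

section GradedUnits

variable {ι R σ : Type*} [DecidableEq ι] [Semiring R] [SetLike σ R] [AddSubmonoidClass σ R]
  (𝒜 : ι → σ)

theorem Units.val_inv_mem_graded [AddGroup ι] [GradedRing 𝒜] (x : Rˣ) {i : ι}
    (hx : (x : R) ∈ 𝒜 i) : ((x⁻¹ : Rˣ) : R) ∈ 𝒜 (-i) := by
  have hmul : (x : R) * decompose 𝒜 ((x⁻¹ : Rˣ) : R) (-i) = 1 := by
    rw [← coe_decompose_mul_add_of_left_mem 𝒜 hx, x.mul_inv, add_neg_cancel,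
      decompose_of_mem_same 𝒜 SetLike.GradedOne.one_mem]
  have hinv : ((x⁻¹ : Rˣ) : R) = decompose 𝒜 ((x⁻¹ : Rˣ) : R) (-i) := by
    rw [← Units.inv_mul_cancel_left x (decompose 𝒜 _ _ : R), hmul, mul_one]
  exact hinv ▸ SetLike.coe_mem _

theorem Units.val_zpow_mem_graded [AddGroup ι] [GradedRing 𝒜] (x : Rˣ) {i : ι}
    (hx : (x : R) ∈ 𝒜 i) : ∀ n : ℤ, ((x ^ n : Rˣ) : R) ∈ 𝒜 (n • i)
  | (n : ℕ) => by
    simpa only [zpow_natCast, Units.val_pow_eq_pow_val, natCast_zsmul] using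
      SetLike.pow_mem_graded n hx
  | .negSucc n => by
    rw [zpow_negSucc, negSucc_zsmul]
    exact Units.val_inv_mem_graded 𝒜 _ (by
      simpa only [Units.val_pow_eq_pow_val] using SetLike.pow_mem_graded (n + 1) hx)

theorem Units.conj_mem_graded [AddCommGroup ι] [GradedRing 𝒜] (x : Rˣ) {i j : ι}
    (hx : (x : R) ∈ 𝒜 i) {a : R} (ha : a ∈ 𝒜 j) : (x : R) * a * ((x⁻¹ : Rˣ) : R) ∈ 𝒜 j := by
  simpa only [add_neg_cancel_comm] using
    SetLike.mul_mem_graded (SetLike.mul_mem_graded hx ha) (x.val_inv_mem_graded 𝒜 hx)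

theorem existsUnique_mem_zero_eq_mul_unit [AddGroup ι] [GradedRing 𝒜] (v : Rˣ) {i : ι}
    (hv : (v : R) ∈ 𝒜 i) {r : R} (hr : r ∈ 𝒜 i) : ∃! a : R, a ∈ 𝒜 0 ∧ r = a * v := by
  refine ⟨r * ((v⁻¹ : Rˣ) : R), ⟨?_, by rw [Units.inv_mul_cancel_right]⟩, ?_⟩
  · simpa only [add_neg_cancel] using SetLike.mul_mem_graded hr (v.val_inv_mem_graded 𝒜 hv)
  · rintro a ⟨-, rfl⟩
    rw [Units.mul_inv_cancel_right]

end GradedUnits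

/-- Structure theorem for graded division rings (Năstăsescu–Van Oystaeyen):
if `R = ⊕ₙ Rₙ` is a ℤ-graded ring in which every nonzero homogeneous element is
invertible, and `t ∈ R₁` is nonzero, then `R₀` is a division ring, `t` is a
unit, every homogeneous element of degree `n` is uniquely of the form `a·tⁿ`
with `a ∈ R₀`, and conjugation by `t` is a ring automorphism of `R₀`
(so `R ≅ R₀[t, t⁻¹; α]`). -/
theorem stmt_12 {R : Type*} [Ring R] (𝒜 : ℤ → AddSubgroup R) [GradedRing 𝒜]
    (hfield : ∀ (n : ℤ) (r : R), r ∈ 𝒜 n → r ≠ 0 → IsUnit r)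
    (t : R) (ht : t ∈ 𝒜 1) (ht0 : t ≠ 0) :
    (∀ a ∈ 𝒜 0, a ≠ 0 → ∃ b ∈ 𝒜 0, a * b = 1 ∧ b * a = 1) ∧
    ∃ u : Rˣ, (u : R) = t ∧
      (∀ n : ℤ, ∀ r ∈ 𝒜 n, ∃! a : R, a ∈ 𝒜 0 ∧ r = a * ((u ^ n : Rˣ) : R)) ∧
      (∀ a ∈ 𝒜 0, (u : R) * a * ((u⁻¹ : Rˣ) : R) ∈ 𝒜 0) ∧
      (∀ a b : R,
        (u : R) * (a * b) * ((u⁻¹ : Rˣ) : R) =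
          ((u : R) * a * ((u⁻¹ : Rˣ) : R)) * ((u : R) * b * ((u⁻¹ : Rˣ) : R))) := by
  refine ⟨fun a ha ha0 => ?_, ?_⟩
  · obtain ⟨v, rfl⟩ := hfield 0 a ha ha0
    exact ⟨_, by simpa using v.val_inv_mem_graded 𝒜 ha, v.mul_inv, v.inv_mul⟩
  obtain ⟨u, rfl⟩ := hfield 1 t ht ht0
  refine ⟨u, rfl, fun n r hr => ?_, fun a ha => u.conj_mem_graded 𝒜 ht ha, fun a b => ?_⟩
  · have hun : ((u ^ n : Rˣ) : R) ∈ 𝒜 n := by simpa using u.val_zpow_mem_graded 𝒜 ht n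
    exact existsUnique_mem_zero_eq_mul_unit 𝒜 _ hun hr
  · simp only [mul_assoc, Units.inv_mul_cancel_left]
end
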